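/- If f : Ξ_out → ℂ is Δσ-twisted positive definite (where Δσ = σ_out − S^⊤ σ_in S for a linear map S : Ξ_out → Ξ_in) and χ : Ξ_in → ℂ is σ_in-twisted positive definite, then the function ξ ↦ f(ξ)·χ(Sξ) is σ_out-twisted positive definite. -/

import Mathlib

/-!
The twist factor splits multiplicatively:
`exp(-(i/2) σ_out(ξ,η)) = exp(-(i/2) Δσ(ξ,η)) · exp(-(i/2) σ_in(Sξ,Sη))`, and `S` is additive, so the
σ_out-twisted matrix of `ξ ↦ f(ξ) χ(Sξ)` at points `ξ_k` is the Hadamard product of the Δσ-twisted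
matrix of `f` at the `ξ_k` and the σ_in-twisted matrix of `χ` at the `Sξ_k`. Both factors are
positive semidefinite, hence so is their product by the Schur product theorem.
-/

open Complex BigOperators

/-- The quadratic form associated to the σ-twisted matrix
`M_{kℓ} = χ(ξ_ℓ − ξ_k) · exp(−(i/2) σ(ξ_k, ξ_ℓ))`. -/
noncomputable def twistedSum {Ξ : Type*} [AddCommGroup Ξ] (σ : Ξ → Ξ → ℝ) (χ : Ξ → ℂ)
    {N : ℕ} (ξ : Fin N → Ξ) (c : Fin N → ℂ) : ℂ :=
  ∑ k, ∑ l, (starRingEnd ℂ) (c k) * c l * χ (ξ l - ξ k) *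
    Complex.exp (-(Complex.I / 2) * ((σ (ξ k) (ξ l) : ℝ) : ℂ))

/-- `χ` is σ-twisted positive definite: every matrix
`M_{kℓ} = χ(ξ_ℓ − ξ_k) exp(−(i/2)σ(ξ_k,ξ_ℓ))` is positive semidefinite, expressed
via nonnegativity of the associated quadratic form. -/
def IsTwistedPosDef {Ξ : Type*} [AddCommGroup Ξ] (σ : Ξ → Ξ → ℝ) (χ : Ξ → ℂ) : Prop :=
  ∀ (N : ℕ) (ξ : Fin N → Ξ) (c : Fin N → ℂ),
    0 ≤ (twistedSum σ χ ξ c).re ∧ (twistedSum σ χ ξ c).im = 0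

open scoped ComplexOrder Matrix

theorem Matrix.posSemidef_of_forall_star_dotProduct_mulVec_nonneg {n : Type*} [Fintype n]
    [DecidableEq n] {M : Matrix n n ℂ} (hM : ∀ x, 0 ≤ star x ⬝ᵥ (M *ᵥ x)) : M.PosSemidef := by
  have inner_eq (v : EuclideanSpace ℂ n) :
      inner ℂ (M.toEuclideanLin v) v = star v.ofLp ⬝ᵥ (M *ᵥ v.ofLp) := by
    change v.ofLp ⬝ᵥ star (M *ᵥ v.ofLp) = _
    rw [dotProduct_comm, Matrix.star_dotProduct, (IsSelfAdjoint.of_nonneg (hM _)).star_eq]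
  rw [← Matrix.isPositive_toEuclideanLin_iff, LinearMap.isPositive_iff,
    LinearMap.isSymmetric_iff_inner_map_self_real]
  simp only [inner_eq]
  exact ⟨fun v => (IsSelfAdjoint.of_nonneg (hM _)).star_eq, fun v => hM _⟩

section Twisted

variable {Ξ : Type*} [AddCommGroup Ξ]

noncomputable def twistedMatrix (σ : Ξ → Ξ → ℝ) (χ : Ξ → ℂ) {ι : Type*} (ξ : ι → Ξ) :
    Matrix ι ι ℂ :=
  Matrix.of fun k l => χ (ξ l - ξ k) * Complex.exp (-(Complex.I / 2) * (σ (ξ k) (ξ l) : ℂ))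

theorem twistedSum_eq_star_dotProduct_mulVec (σ : Ξ → Ξ → ℝ) (χ : Ξ → ℂ) {N : ℕ}
    (ξ : Fin N → Ξ) (c : Fin N → ℂ) :
    twistedSum σ χ ξ c = star c ⬝ᵥ (twistedMatrix σ χ ξ *ᵥ c) := by
  simp only [twistedSum, twistedMatrix, dotProduct, Matrix.mulVec, Matrix.of_apply,
    Finset.mul_sum, Pi.star_apply, Complex.star_def]
  refine Finset.sum_congr rfl fun k _ => Finset.sum_congr rfl fun l _ => ?_
  ring

theorem isTwistedPosDef_iff_posSemidef (σ : Ξ → Ξ → ℝ) (χ : Ξ → ℂ) :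
    IsTwistedPosDef σ χ ↔ ∀ (N : ℕ) (ξ : Fin N → Ξ), (twistedMatrix σ χ ξ).PosSemidef := by
  have nonneg_iff (z : ℂ) : 0 ≤ z ↔ 0 ≤ z.re ∧ z.im = 0 := by rw [Complex.nonneg_iff, eq_comm]
  simp only [IsTwistedPosDef, twistedSum_eq_star_dotProduct_mulVec, ← nonneg_iff]
  exact forall_congr' fun N => forall_congr' fun ξ =>
    ⟨Matrix.posSemidef_of_forall_star_dotProduct_mulVec_nonneg, fun h => h.dotProduct_mulVec_nonneg⟩

theorem twistedMatrix_add_mul (σ τ : Ξ → Ξ → ℝ) (f g : Ξ → ℂ) {ι : Type*} (ξ : ι → Ξ) :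
    twistedMatrix (σ + τ) (f * g) ξ = twistedMatrix σ f ξ ⊙ twistedMatrix τ g ξ := by
  ext k l
  simp only [twistedMatrix, Matrix.hadamard_apply, Matrix.of_apply, Pi.add_apply, Pi.mul_apply,
    Complex.ofReal_add, mul_add, Complex.exp_add]
  ring

theorem IsTwistedPosDef.mul {σ τ : Ξ → Ξ → ℝ} {f g : Ξ → ℂ} (hf : IsTwistedPosDef σ f)
    (hg : IsTwistedPosDef τ g) : IsTwistedPosDef (σ + τ) (f * g) := by
  rw [isTwistedPosDef_iff_posSemidef] at hf hg ⊢
  intro N ξ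
  rw [twistedMatrix_add_mul]
  exact (hf N ξ).hadamard (hg N ξ)

theorem IsTwistedPosDef.comp {Ξ' : Type*} [AddCommGroup Ξ'] {τ : Ξ' → Ξ' → ℝ} {χ : Ξ' → ℂ}
    (hχ : IsTwistedPosDef τ χ) (S : Ξ →+ Ξ') :
    IsTwistedPosDef (fun a b => τ (S a) (S b)) (χ ∘ S) := by
  intro N ξ c
  simpa only [twistedSum, Function.comp_apply, map_sub] using hχ N (S ∘ ξ) c

end Twisted

theorem twisted_posdef_channel_output_general {Ξout Ξin : Type*}
    [AddCommGroup Ξout] [Module ℝ Ξout] [AddCommGroup Ξin] [Module ℝ Ξin]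
    (σout : Ξout →ₗ[ℝ] Ξout →ₗ[ℝ] ℝ) (σin : Ξin →ₗ[ℝ] Ξin →ₗ[ℝ] ℝ)
    (S : Ξout →ₗ[ℝ] Ξin) (f : Ξout → ℂ) (χ : Ξin → ℂ)
    (hf : IsTwistedPosDef (fun ξ η => σout ξ η - σin (S ξ) (S η)) f)
    (hχ : IsTwistedPosDef (fun ξ η => σin ξ η) χ) :
    IsTwistedPosDef (fun ξ η => σout ξ η) (fun ξ => f ξ * χ (S ξ)) := by
  have hprod := hf.mul (hχ.comp S.toAddMonoidHom)
  convert hprod using 1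
  · funext ξ η
    simp
  · rfl

/-- If f is Δσ-twisted positive definite (Δσ = σ_out − S^⊤σ_in S) and χ is
σ_in-twisted positive definite, then ξ ↦ f(ξ)·χ(Sξ) is σ_out-twisted positive definite. -/
theorem twisted_posdef_channel_output {Ξout Ξin : Type*}
    [AddCommGroup Ξout] [Module ℝ Ξout] [AddCommGroup Ξin] [Module ℝ Ξin]
    (σout : Ξout →ₗ[ℝ] Ξout →ₗ[ℝ] ℝ) (σin : Ξin →ₗ[ℝ] Ξin →ₗ[ℝ] ℝ)
    (hout : ∀ ξ η : Ξout, σout ξ η = - σout η ξ)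
    (hin : ∀ ξ η : Ξin, σin ξ η = - σin η ξ)
    (S : Ξout →ₗ[ℝ] Ξin) (f : Ξout → ℂ) (χ : Ξin → ℂ)
    (hf : IsTwistedPosDef (fun ξ η => σout ξ η - σin (S ξ) (S η)) f)
    (hχ : IsTwistedPosDef (fun ξ η => σin ξ η) χ) :
    IsTwistedPosDef (fun ξ η => σout ξ η) (fun ξ => f ξ * χ (S ξ)) :=
  twisted_posdef_channel_output_general σout σin S f χ hf hχ
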